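/- If a probability measure μ on ℂ is 2π/2^b-symmetric, i.e. invariant under multiplication by e^{i·2π/2^b}, then the output distribution of the b-bit phase-quantized Gaussian channel is uniform: p_y = ∫_ℂ W_y^{(b)}(u) dμ(u) = 2^{−b} for every y ∈ {0,…,2^b−1}; consequently the output entropy H(Y) = Σ_{y=0}^{2^b−1}(−p_y log₂ p_y) equals b, its maximum possible value. -/

import Mathlib

/-! With `φ(z) = π⁻¹ exp (-‖z‖²)`, the transition probability is `W_y(u) = ∫_{R_y} φ(z - u) dz`.
Rotation by `δ = 2π/2^b` is a measure-preserving isometry of `ℂ` that maps `R_y` onto `R_{y+1}`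
and leaves `φ` invariant, so `W_{y+1}(e^{iδ} u) = W_y(u)`; integrating against a `δ`-invariant `μ`
gives `p_{y+1} = p_y`. The sectors partition `ℂ \ {0}`, which has full measure, so the `p_y` sum
to `1` and each equals `2^{-b}`; the entropy of the uniform law on `2^b` outputs is `b`. -/

open MeasureTheory Real

noncomputable section

/-- Argument of a complex number taking values in `[0, 2π)`. -/
def arg2pi (z : ℂ) : ℝ := if 0 ≤ Complex.arg z then Complex.arg z else Complex.arg z + 2 * π

/-- The quantization sector `R_y` of a `b`-bit phase quantizer. -/
def sector (b y : ℕ) : Set ℂ :=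
  {z : ℂ | z ≠ 0 ∧ 2 * π * y / 2 ^ b ≤ arg2pi z ∧ arg2pi z < 2 * π * (y + 1) / 2 ^ b}

/-- Transition probability `W_y^{(b)}(α, θ)` of the `b`-bit phase-quantized Gaussian channel. -/
def W (b y : ℕ) (α θ : ℝ) : ℝ :=
  ∫ z in sector b y,
    (1 / π) *
      Real.exp (-(‖z - (Real.sqrt α : ℂ) * Complex.exp ((θ : ℂ) * Complex.I)‖ ^ 2))

/-- Transition probability with integer output index, understood modulo `2^b`. -/
def Wz (b : ℕ) (y : ℤ) (α θ : ℝ) : ℝ := W b ((y % (2 ^ b : ℤ)).toNat) α θ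

/-- `x ↦ -x log₂ x`, with the convention `0 log₂ 0 = 0`. -/
def nH (x : ℝ) : ℝ := -(x * Real.logb 2 x)

/-- Conditional output entropy `H(Y | U = √α e^{iθ})`. -/
def hEnt (b : ℕ) (α θ : ℝ) : ℝ := ∑ y ∈ Finset.range (2 ^ b), nH (W b y α θ)

/-- `W_y^{(b)}(u)` for a complex channel input `u`. -/
def Wu (b y : ℕ) (u : ℂ) : ℝ := W b y (‖u‖ ^ 2) (arg2pi u)

/-- Output probability `p_y` under input distribution `μ`. -/
def outP (b : ℕ) (μ : Measure ℂ) (y : ℕ) : ℝ := ∫ u, Wu b y u ∂μ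

/-- Mutual information of the `b`-bit phase-quantized Gaussian channel with input law `μ`. -/
def mutInfo (b : ℕ) (μ : Measure ℂ) : ℝ :=
  (∑ y ∈ Finset.range (2 ^ b), nH (outP b μ y)) -
    ∫ u, ∑ y ∈ Finset.range (2 ^ b), nH (Wu b y u) ∂μ

/-- Rotation of the complex plane by the angle `2π/2^b`. -/
def rot (b : ℕ) : ℂ → ℂ := fun u => Complex.exp (((2 * π / 2 ^ b : ℝ) : ℂ) * Complex.I) * u

/-- A measure on `ℂ` is `2π/2^b`-symmetric if it is invariant under rotation by `2π/2^b`. -/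
def RotSymm (b : ℕ) (μ : Measure ℂ) : Prop := Measure.map (rot b) μ = μ

lemma arg2pi_eq_toIcoMod (z : ℂ) : arg2pi z = toIcoMod two_pi_pos 0 (Complex.arg z) := by
  have := Complex.neg_pi_lt_arg z
  have := Complex.arg_le_pi z
  unfold arg2pi
  split_ifs with h
  · exact ((toIcoMod_eq_self two_pi_pos).2 ⟨h, by linarith [pi_pos]⟩).symm
  · rw [← toIcoMod_add_right]
    exact ((toIcoMod_eq_self two_pi_pos).2 ⟨by linarith, by linarith⟩).symm

lemma arg2pi_mem_Ico (z : ℂ) : arg2pi z ∈ Set.Ico 0 (2 * π) := by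
  rw [arg2pi_eq_toIcoMod]
  simpa using toIcoMod_mem_Ico two_pi_pos 0 (Complex.arg z)

lemma measurable_arg2pi : Measurable arg2pi :=
  Measurable.ite (measurableSet_le measurable_const Complex.measurable_arg)
    Complex.measurable_arg (Complex.measurable_arg.add_const _)

lemma arg2pi_exp_mul {z : ℂ} (hz : z ≠ 0) {θ : ℝ} (hθ : arg2pi z + θ ∈ Set.Ico 0 (2 * π)) :
    arg2pi (Complex.exp (θ * Complex.I) * z) = arg2pi z + θ := by
  -- both sides lie in `[0, 2π)` and agree modulo `2π`
  have hcoe : ((arg2pi (Complex.exp (θ * Complex.I) * z) : ℝ) : Real.Angle) = ↑(arg2pi z + θ) := by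
    rw [arg2pi_eq_toIcoMod, arg2pi_eq_toIcoMod, Real.Angle.coe_toIcoMod, Real.Angle.coe_add,
      Real.Angle.coe_toIcoMod, Complex.arg_mul_coe_angle (Complex.exp_ne_zero _) hz,
      Complex.arg_exp_mul_I, Real.Angle.coe_toIocMod, add_comm]
  have : Fact (0 < 2 * π) := ⟨two_pi_pos⟩
  exact (AddCircle.coe_eq_coe_iff_of_mem_Ico (a := 0) (by simpa using arg2pi_mem_Ico _)
    (by simpa using hθ)).1 hcoe

def sectorIndex (b : ℕ) (z : ℂ) : ℕ := ⌊arg2pi z * 2 ^ b / (2 * π)⌋₊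

lemma mem_sector_iff {b y : ℕ} {z : ℂ} : z ∈ sector b y ↔ z ≠ 0 ∧ sectorIndex b z = y := by
  have h2b : (0 : ℝ) < 2 ^ b := by positivity
  have ha := (arg2pi_mem_Ico z).1
  rw [sectorIndex, Nat.floor_eq_iff (by positivity)]
  simp only [sector, Set.mem_ofPred_eq, div_le_iff₀ h2b, lt_div_iff₀ h2b, le_div_iff₀ two_pi_pos,
    div_lt_iff₀ two_pi_pos]
  constructor <;> rintro ⟨hz, h1, h2⟩ <;> exact ⟨hz, by linarith, by linarith⟩

lemma sectorIndex_lt (b : ℕ) (z : ℂ) : sectorIndex b z < 2 ^ b := by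
  have ha := arg2pi_mem_Ico z
  rw [sectorIndex, Nat.floor_lt (by have := ha.1; positivity), div_lt_iff₀ two_pi_pos]
  push_cast
  nlinarith [ha.2, pow_pos (two_pos : (0 : ℝ) < 2) b]

lemma measurableSet_sector (b y : ℕ) : MeasurableSet (sector b y) :=
  (measurableSet_singleton 0).compl.inter <|
    (measurableSet_le measurable_const measurable_arg2pi).inter
      (measurableSet_lt measurable_arg2pi measurable_const)

lemma pairwise_disjoint_sector (b : ℕ) : Pairwise (Function.onFun Disjoint (sector b)) :=
  fun _ _ hne => Set.disjoint_left.2 fun _ h h' =>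
    hne ((mem_sector_iff.1 h).2.symm.trans (mem_sector_iff.1 h').2)

lemma biUnion_sector (b : ℕ) : ⋃ y ∈ Finset.range (2 ^ b), sector b y = {0}ᶜ := by
  ext z
  simp only [Set.mem_iUnion, mem_sector_iff, Finset.mem_range, exists_prop]
  exact ⟨fun ⟨_, _, hz, _⟩ => hz, fun hz => ⟨_, sectorIndex_lt b z, hz, rfl⟩⟩

lemma preimage_rot_sector_succ {b y : ℕ} (hy : y + 1 < 2 ^ b) :
    rot b ⁻¹' sector b (y + 1) = sector b y := by
  set δ : ℝ := 2 * π / 2 ^ b with hδ_def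
  have hδ : 0 < δ := by positivity
  have hyδ : ((y : ℝ) + 1 + 1) * δ ≤ 2 * π := by
    have : (y : ℝ) + 1 + 1 ≤ 2 ^ b := by exact_mod_cast hy
    calc ((y : ℝ) + 1 + 1) * δ ≤ 2 ^ b * δ := by gcongr
      _ = 2 * π := by rw [hδ_def]; field_simp
  have hyδ₀ : 0 ≤ (y : ℝ) * δ := by positivity
  have hbound : ∀ m : ℝ, 2 * π * m / 2 ^ b = m * δ := fun m => by rw [hδ_def]; ring
  ext z
  simp only [Set.mem_preimage, sector, Set.mem_ofPred_eq, hbound]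
  push_cast
  rcases eq_or_ne z 0 with rfl | hz
  · simp [rot]
  have hrz : rot b z ≠ 0 := mul_ne_zero (Complex.exp_ne_zero _) hz
  have ha := arg2pi_mem_Ico z
  have ha' := arg2pi_mem_Ico (rot b z)
  have hrot_inv : Complex.exp ((-δ : ℝ) * Complex.I) * rot b z = z := by
    rw [rot, ← mul_assoc, ← Complex.exp_add, ← add_mul, Complex.ofReal_neg, neg_add_cancel,
      zero_mul, Complex.exp_zero, one_mul]
  constructor
  · rintro ⟨-, h1, h2⟩
    have h := arg2pi_exp_mul hrz (θ := -δ) ⟨by linarith, by linarith [ha'.2]⟩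
    rw [hrot_inv] at h
    exact ⟨hz, by linarith, by linarith⟩
  · rintro ⟨-, h1, h2⟩
    have h : arg2pi (rot b z) = arg2pi z + δ :=
      arg2pi_exp_mul hz ⟨by linarith [ha.1], by linarith⟩
    exact ⟨hrz, by linarith, by linarith⟩

def gaussianDensity (u z : ℂ) : ℝ := 1 / π * Real.exp (-‖z - u‖ ^ 2)

lemma gaussianDensity_nonneg (u z : ℂ) : 0 ≤ gaussianDensity u z := by
  unfold gaussianDensity; positivity

lemma integral_gaussianDensity (u : ℂ) : ∫ z, gaussianDensity u z = 1 := by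
  have h := GaussianFourier.integral_rexp_neg_mul_sq_norm (V := ℂ) one_pos
  simp only [neg_mul, one_mul, Complex.finrank_real_complex, div_one] at h
  simp only [gaussianDensity]
  rw [integral_sub_right_eq_self (fun z => 1 / π * Real.exp (-‖z‖ ^ 2)) u, integral_const_mul, h]
  norm_num [pi_pos.ne']

lemma integrable_gaussianDensity (u : ℂ) : Integrable (gaussianDensity u) :=
  Integrable.of_integral_ne_zero (by rw [integral_gaussianDensity]; exact one_ne_zero)

lemma continuous_gaussianDensity_uncurry :
    Continuous fun p : ℂ × ℂ => gaussianDensity p.1 p.2 := by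
  unfold gaussianDensity; fun_prop

lemma gaussianDensity_mul_mul {c : ℂ} (hc : ‖c‖ = 1) (u z : ℂ) :
    gaussianDensity (c * u) (c * z) = gaussianDensity u z := by
  rw [gaussianDensity, ← mul_sub, norm_mul, hc, one_mul, gaussianDensity]

lemma Wu_eq_setIntegral (b y : ℕ) (u : ℂ) : Wu b y u = ∫ z in sector b y, gaussianDensity u z := by
  have hexp : Complex.exp (arg2pi u * Complex.I) = Complex.exp (Complex.arg u * Complex.I) := by
    rw [arg2pi]; split_ifs
    · rfl
    · push_cast
      rw [add_mul, Complex.exp_add, Complex.exp_two_pi_mul_I, mul_one]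
  simp_rw [Wu, W, Real.sqrt_sq (norm_nonneg u), hexp, Complex.norm_mul_exp_arg_mul_I]
  rfl

lemma Wu_nonneg (b y : ℕ) (u : ℂ) : 0 ≤ Wu b y u := by
  rw [Wu_eq_setIntegral]
  exact setIntegral_nonneg (measurableSet_sector b y) fun z _ => gaussianDensity_nonneg u z

lemma Wu_le_one (b y : ℕ) (u : ℂ) : Wu b y u ≤ 1 := by
  rw [Wu_eq_setIntegral, ← integral_gaussianDensity u]
  exact setIntegral_le_integral (integrable_gaussianDensity u)
    (ae_of_all _ (gaussianDensity_nonneg u))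

lemma sum_Wu (b : ℕ) (u : ℂ) : ∑ y ∈ Finset.range (2 ^ b), Wu b y u = 1 := by
  simp_rw [Wu_eq_setIntegral]
  rw [← integral_biUnion_finset _ (fun y _ => measurableSet_sector b y)
      (fun _ _ _ _ hne => pairwise_disjoint_sector b hne)
      (fun _ _ => (integrable_gaussianDensity u).integrableOn), biUnion_sector,
    setIntegral_congr_set (ae_eq_univ.2 (by simp)), setIntegral_univ, integral_gaussianDensity]

lemma stronglyMeasurable_Wu (b y : ℕ) : StronglyMeasurable (Wu b y) := by
  have hind : StronglyMeasurable fun p : ℂ × ℂ =>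
      (Prod.snd ⁻¹' sector b y).indicator (fun p : ℂ × ℂ => gaussianDensity p.1 p.2) p :=
    continuous_gaussianDensity_uncurry.stronglyMeasurable.indicator
      (measurable_snd (measurableSet_sector b y))
  convert hind.integral_prod_right' (ν := (volume : Measure ℂ)) using 2 with u
  rw [Wu_eq_setIntegral, ← integral_indicator (measurableSet_sector b y)]
  rfl

lemma rot_eq_rotation (b : ℕ) : rot b = rotation (Circle.exp (2 * π / 2 ^ b)) := by
  ext z
  rw [rot, rotation_apply, Circle.coe_exp]

lemma Wu_rot_succ {b y : ℕ} (hy : y + 1 < 2 ^ b) (u : ℂ) : Wu b (y + 1) (rot b u) = Wu b y u := by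
  have hrot : MeasurePreserving (rot b) := rot_eq_rotation b ▸ (rotation _).measurePreserving
  rw [Wu_eq_setIntegral, Wu_eq_setIntegral, ← hrot.setIntegral_preimage_emb
    (rot_eq_rotation b ▸ (rotation _).toHomeomorph.measurableEmbedding),
    preimage_rot_sector_succ hy]
  refine setIntegral_congr_fun (measurableSet_sector b y) fun z _ => ?_
  exact gaussianDensity_mul_mul (Complex.norm_exp_ofReal_mul_I _) u z

lemma integrable_Wu (b y : ℕ) (μ : Measure ℂ) [IsFiniteMeasure μ] : Integrable (Wu b y) μ :=
  .of_bound (stronglyMeasurable_Wu b y).aestronglyMeasurable 1 <| ae_of_all _ fun u => by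
    rw [Real.norm_of_nonneg (Wu_nonneg b y u)]
    exact Wu_le_one b y u

lemma sum_outP (b : ℕ) (μ : Measure ℂ) [IsProbabilityMeasure μ] :
    ∑ y ∈ Finset.range (2 ^ b), outP b μ y = 1 := by
  simp only [outP]
  rw [← integral_finsetSum _ fun y _ => integrable_Wu b y μ]
  simp [sum_Wu]

lemma outP_succ {b : ℕ} {μ : Measure ℂ} (hμ : RotSymm b μ) {y : ℕ} (hy : y + 1 < 2 ^ b) :
    outP b μ (y + 1) = outP b μ y := by
  calc outP b μ (y + 1) = ∫ u, Wu b (y + 1) u ∂(μ.map (rot b)) := by rw [hμ]; rfl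
    _ = ∫ u, Wu b (y + 1) (rot b u) ∂μ :=
      integral_map (continuous_const_mul _).aemeasurable
        (stronglyMeasurable_Wu b (y + 1)).aestronglyMeasurable
    _ = outP b μ y := by simp_rw [Wu_rot_succ hy]; rfl

lemma eq_inv_of_succ_eq_of_sum_eq_one {n : ℕ} {p : ℕ → ℝ}
    (hsucc : ∀ y, y + 1 < n → p (y + 1) = p y) (hsum : ∑ y ∈ Finset.range n, p y = 1)
    {y : ℕ} (hy : y < n) : p y = (n : ℝ)⁻¹ := by
  have hconst : ∀ y < n, p y = p 0 := by
    intro y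
    induction y with
    | zero => intro _; rfl
    | succ k ih => intro hk; rw [hsucc k hk, ih (by omega)]
  rw [Finset.sum_congr rfl fun y hy => hconst y (Finset.mem_range.1 hy), Finset.sum_const,
    Finset.card_range, nsmul_eq_mul] at hsum
  rw [hconst y hy, eq_inv_of_mul_eq_one_right hsum]

lemma sum_range_nH_inv (n : ℕ) : ∑ _y ∈ Finset.range n, nH (n : ℝ)⁻¹ = Real.logb 2 n := by
  rcases eq_or_ne n 0 with rfl | hn
  · simp
  rw [Finset.sum_const, Finset.card_range, nsmul_eq_mul, nH, Real.logb_inv]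
  field_simp

theorem stmt_4_general (b : ℕ) (μ : Measure ℂ) [IsProbabilityMeasure μ]
    (hμ : RotSymm b μ) :
    (∀ y ∈ Finset.range (2 ^ b), outP b μ y = (2 ^ b : ℝ)⁻¹) ∧
      (∑ y ∈ Finset.range (2 ^ b), nH (outP b μ y)) = b := by
  have huniform : ∀ y ∈ Finset.range (2 ^ b), outP b μ y = (2 ^ b : ℝ)⁻¹ := fun y hy => by
    exact_mod_cast eq_inv_of_succ_eq_of_sum_eq_one (fun _ => outP_succ hμ) (sum_outP b μ)
      (Finset.mem_range.1 hy)
  refine ⟨huniform, ?_⟩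
  have hentropy := sum_range_nH_inv (2 ^ b)
  push_cast at hentropy
  rw [Finset.sum_congr rfl fun y hy => congrArg nH (huniform y hy), hentropy, Real.logb_pow,
    Real.logb_self_eq_one one_lt_two, mul_one]

/-- under a `2π/2^b`-symmetric input distribution the output of the quantizer
is uniform, so the output entropy equals `b`. -/
theorem stmt_4 (b : ℕ) (hb : 1 ≤ b) (μ : Measure ℂ) [IsProbabilityMeasure μ]
    (hμ : RotSymm b μ) :
    (∀ y ∈ Finset.range (2 ^ b), outP b μ y = (2 ^ b : ℝ)⁻¹) ∧
      (∑ y ∈ Finset.range (2 ^ b), nH (outP b μ y)) = b :=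
  stmt_4_general b μ hμ

end
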